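/- Fix $t\ge 1$ and $\tilde r\ge 0$. For $\lambda>0$ define $f(\lambda) = \frac{t\lambda}{\sqrt{t^2+t\lambda^2}} + \tilde r$. Then for every integer $\ell\ge 0$ there is a constant $C_\ell$ (independent of $t$ and $\tilde r$) such that $\left|\partial_\lambda^\ell\big(f(\lambda)^{-1}\big)\right| \le C_\ell\, \lambda^{-1-\ell}$ for all $0 < \lambda < 2\sqrt{t}$. -/

import Mathlib

/-!
Write `f(λ) = √t · g(λ/√t) + r̃` with `g(u) = u / √(1 + u²)`. For `i ≥ 1` the bound
`|f⁽ⁱ⁾(λ)| ≤ K^i λ^(1-i)` is invariant under this rescaling, so it suffices to know it for `g` on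
`(0, 2]`, where it follows from compactness. Together with `f(λ) ≥ λ/√5` for `λ ≤ 2√t`, Faà di
Bruno's formula applied to `z ↦ z⁻¹` and to `f/λ` gives `|(1/f)⁽ˡ⁾(λ)| ≲ λ^(-1-ℓ)`.
-/

open Set Nat

lemma norm_iteratedFDerivWithin_eq_abs_iteratedDeriv {f : ℝ → ℝ} {s : Set ℝ} {x : ℝ} (n : ℕ)
    (hs : IsOpen s) (hx : x ∈ s) :
    ‖iteratedFDerivWithin ℝ n f s x‖ = |iteratedDeriv n f x| := by
  rw [iteratedFDerivWithin_of_isOpen n hs hx, norm_iteratedFDeriv_eq_norm_iteratedDeriv,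
    Real.norm_eq_abs]

lemma abs_iteratedDeriv_inv_le {n i : ℕ} (hi : i ≤ n) {z B : ℝ} (hB : 1 ≤ B) (hz : 1 ≤ B * z) :
    |iteratedDeriv i Inv.inv z| ≤ n ! * B ^ (n + 1) := by
  have hz0 : 0 < z := pos_of_mul_pos_right (a := B) (by linarith) (by linarith)
  have hzB : z⁻¹ ≤ B := by rwa [inv_le_iff_one_le_mul₀ hz0]
  rw [iteratedDeriv_eq_iterate, iter_deriv_inv, abs_mul, abs_mul, abs_pow, abs_neg, abs_one,
    one_pow, one_mul, Nat.abs_cast, abs_of_pos (zpow_pos hz0 _),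
    show (-1 - i : ℤ) = -((i + 1 : ℕ) : ℤ) by push_cast; ring, zpow_neg, zpow_natCast, ← inv_pow]
  gcongr
  calc z⁻¹ ^ (i + 1) ≤ B ^ (i + 1) := by gcongr
    _ ≤ B ^ (n + 1) := pow_le_pow_right₀ hB (by omega)

lemma abs_iteratedDeriv_inv_comp_le {F : ℝ → ℝ} {s : Set ℝ} {n : ℕ} (hs : IsOpen s)
    (hF : ContDiffOn ℝ n F s) (hF0 : ∀ y ∈ s, F y ≠ 0) {x : ℝ} (hx : x ∈ s) {B K : ℝ}
    (hB : 1 ≤ B) (hFx : 1 ≤ B * F x) (hD : ∀ i, 1 ≤ i → i ≤ n → |iteratedDeriv i F x| ≤ K ^ i) :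
    |iteratedDeriv n (fun y => (F y)⁻¹) x| ≤ n ! * (n ! * B ^ (n + 1)) * K ^ n := by
  have hFx0 : F x ∈ ({0}ᶜ : Set ℝ) := hF0 x hx
  have key := norm_iteratedFDerivWithin_comp_le (contDiffOn_inv ℝ) hF le_rfl
    isOpen_compl_singleton.uniqueDiffOn hs.uniqueDiffOn hF0 hx
    (fun i hi => (norm_iteratedFDerivWithin_eq_abs_iteratedDeriv i isOpen_compl_singleton
      hFx0).trans_le (abs_iteratedDeriv_inv_le hi hB hFx))
    (fun i h1 h2 => (norm_iteratedFDerivWithin_eq_abs_iteratedDeriv i hs hx).trans_le (hD i h1 h2))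
  rwa [norm_iteratedFDerivWithin_eq_abs_iteratedDeriv n hs hx] at key

/-- `a * (K / a) ^ i = K ^ i * a ^ (1 - i)`: the bounds of a symbol of order one at scale `a`. -/
lemma abs_iteratedDeriv_inv_le_of_symbol {F : ℝ → ℝ} {s : Set ℝ} {n : ℕ} (hs : IsOpen s)
    (hF : ContDiffOn ℝ n F s) (hF0 : ∀ y ∈ s, F y ≠ 0) {x : ℝ} (hx : x ∈ s) {a B K : ℝ}
    (ha : 0 < a) (hB : 1 ≤ B) (hFx : a ≤ B * F x)
    (hD : ∀ i, 1 ≤ i → i ≤ n → |iteratedDeriv i F x| ≤ a * (K / a) ^ i) :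
    |iteratedDeriv n (fun y => (F y)⁻¹) x| ≤
      n ! * (n ! * B ^ (n + 1)) * K ^ n * a ^ (-1 - (n : ℝ)) := by
  have hbound := abs_iteratedDeriv_inv_comp_le (F := fun y => a⁻¹ * F y) (K := K / a) hs
    (contDiffOn_const.mul hF) (fun y hy => mul_ne_zero (inv_ne_zero ha.ne') (hF0 y hy)) hx hB
    (by rwa [mul_left_comm, le_inv_mul_iff₀ ha, mul_one])
    (fun i h1 h2 => by
      rw [iteratedDeriv_const_mul_field, abs_mul, abs_of_pos (inv_pos.mpr ha), inv_mul_le_iff₀ ha]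
      exact hD i h1 h2)
  have hrecip : (fun y => (F y)⁻¹) = fun y => a⁻¹ * (a⁻¹ * F y)⁻¹ := by
    funext y
    rw [mul_inv, inv_inv, inv_mul_cancel_left₀ ha.ne']
  have hrpow : a ^ (-1 - (n : ℝ)) = a⁻¹ / a ^ n := by
    rw [show -1 - (n : ℝ) = -((n + 1 : ℕ) : ℝ) by push_cast; ring, Real.rpow_neg ha.le,
      Real.rpow_natCast, _root_.pow_succ', mul_inv, div_eq_mul_inv]
  rw [hrecip, iteratedDeriv_const_mul_field, abs_mul, abs_of_pos (inv_pos.mpr ha), hrpow]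
  calc a⁻¹ * |iteratedDeriv n (fun y => (a⁻¹ * F y)⁻¹) x|
      ≤ a⁻¹ * (n ! * (n ! * B ^ (n + 1)) * (K / a) ^ n) := by gcongr
    _ = _ := by rw [div_pow]; ring

noncomputable def sqrtProfile (u : ℝ) : ℝ := u / √(1 + u ^ 2)

lemma contDiff_sqrtProfile {n : WithTop ℕ∞} : ContDiff ℝ n sqrtProfile :=
  contDiff_id.div ((contDiff_const.add (contDiff_id.pow 2)).sqrt fun u => by positivity)
    fun u => by positivity

lemma sqrtProfile_pos {u : ℝ} (hu : 0 < u) : 0 < sqrtProfile u := by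
  unfold sqrtProfile
  positivity

lemma div_sqrt_five_le_sqrtProfile {u : ℝ} (hu0 : 0 ≤ u) (hu : u ≤ 2) :
    u / √5 ≤ sqrtProfile u :=
  div_le_div_of_nonneg_left hu0 (by positivity) (Real.sqrt_le_sqrt (by nlinarith))

lemma sqrt_mul_sqrtProfile_inv_mul {t : ℝ} (ht : 0 < t) (x : ℝ) :
    √t * sqrtProfile ((√t)⁻¹ * x) = t * x / √(t ^ 2 + t * x ^ 2) := by
  have hsq : √(t ^ 2 + t * x ^ 2) = t * √(1 + ((√t)⁻¹ * x) ^ 2) := by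
    have h : t ^ 2 + t * x ^ 2 = t ^ 2 * (1 + ((√t)⁻¹ * x) ^ 2) := by
      rw [mul_pow, inv_pow, Real.sq_sqrt ht.le]
      field_simp
    rw [h, Real.sqrt_mul (sq_nonneg t), Real.sqrt_sq ht.le]
  have hpos : 0 < √(1 + ((√t)⁻¹ * x) ^ 2) := by positivity
  rw [hsq, sqrtProfile]
  field_simp

lemma ContDiff.exists_abs_iteratedDeriv_le_symbol {g : ℝ → ℝ} {n : ℕ} (hg : ContDiff ℝ n g)
    {R : ℝ} (hR : 0 < R) :
    ∃ K, 0 < K ∧ ∀ i, 1 ≤ i → i ≤ n → ∀ u ∈ Ioc 0 R, |iteratedDeriv i g u| ≤ u * (K / u) ^ i := by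
  obtain ⟨M, hM⟩ := (isCompact_Icc (a := 0) (b := R)).exists_bound_of_continuousOn
    (f := fun u => ∑ i ∈ Finset.range (n + 1), |iteratedDeriv i g u|)
    (Continuous.continuousOn (continuous_finsetSum _ fun i hi =>
      (hg.continuous_iteratedDeriv i (by exact_mod_cast Finset.mem_range_succ_iff.mp hi)).abs))
  have hM0 : 0 ≤ M := (norm_nonneg _).trans (hM 0 ⟨le_rfl, hR.le⟩)
  refine ⟨R + M, by positivity, fun i h1 h2 u hu => ?_⟩
  obtain ⟨j, rfl⟩ : ∃ j, i = j + 1 := ⟨i - 1, by omega⟩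
  have hu0 : 0 < u := hu.1
  calc |iteratedDeriv (j + 1) g u|
      ≤ ∑ i ∈ Finset.range (n + 1), |iteratedDeriv i g u| :=
        Finset.single_le_sum (f := fun i => |iteratedDeriv i g u|) (fun _ _ => abs_nonneg _)
          (Finset.mem_range_succ_iff.mpr h2)
    _ ≤ M := (le_abs_self _).trans (hM u (Ioc_subset_Icc_self hu))
    _ ≤ (R + M) * 1 := by linarith
    _ ≤ (R + M) * ((R + M) / u) ^ j := by
        gcongr
        exact one_le_pow₀ ((one_le_div hu0).mpr (by linarith [hu.2]))
    _ = u * ((R + M) / u) ^ (j + 1) := by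
        rw [pow_succ]
        field_simp

lemma abs_iteratedDeriv_rescale_le {g : ℝ → ℝ} {i : ℕ} (hg : ContDiff ℝ i g) (hi : 1 ≤ i)
    {c : ℝ} (hc : 0 < c) (r : ℝ) {x K : ℝ} (hx : 0 < x)
    (h : |iteratedDeriv i g (c⁻¹ * x)| ≤ c⁻¹ * x * (K / (c⁻¹ * x)) ^ i) :
    |iteratedDeriv i (fun y => c * g (c⁻¹ * y) + r) x| ≤ x * (K / x) ^ i := by
  have hderiv : iteratedDeriv i (fun y => c * g (c⁻¹ * y) + r) x =
      c * (c⁻¹ ^ i * iteratedDeriv i g (c⁻¹ * x)) := by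
    simp_rw [add_comm _ r]
    rw [iteratedDeriv_const_add hi, iteratedDeriv_const_mul_field, iteratedDeriv_comp_const_mul hg]
  calc |iteratedDeriv i (fun y => c * g (c⁻¹ * y) + r) x|
      = c * c⁻¹ ^ i * |iteratedDeriv i g (c⁻¹ * x)| := by
        rw [hderiv, abs_mul, abs_mul, abs_of_pos hc, abs_of_pos (by positivity), mul_assoc]
    _ ≤ c * c⁻¹ ^ i * (c⁻¹ * x * (K / (c⁻¹ * x)) ^ i) := by gcongr
    _ = x * (K / x) ^ i := by
        rw [show K / (c⁻¹ * x) = c * (K / x) by field_simp, mul_pow, inv_pow]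
        field_simp

/-- Derivative bounds (I-bp4) for the reciprocal of `f(λ) = tλ/√(t²+tλ²) + r̃`. -/
theorem stmt3 (ℓ : ℕ) :
    ∃ C : ℝ, 0 < C ∧ ∀ t rt : ℝ, 1 ≤ t → 0 ≤ rt →
      ∀ lam : ℝ, 0 < lam → lam < 2 * Real.sqrt t →
        |iteratedDeriv ℓ (fun x : ℝ => (t * x / Real.sqrt (t^2 + t * x^2) + rt)⁻¹) lam| ≤
          C * lam ^ (-1 - (ℓ : ℝ)) := by
  obtain ⟨K, hK, hsymbol⟩ :=
    (contDiff_sqrtProfile (n := ℓ)).exists_abs_iteratedDeriv_le_symbol two_pos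
  refine ⟨ℓ ! * (ℓ ! * √5 ^ (ℓ + 1)) * K ^ ℓ, by positivity, ?_⟩
  intro t rt ht hrt lam hlam hlam2
  have hc : 0 < √t := Real.sqrt_pos.mpr (by linarith)
  have hu : (√t)⁻¹ * lam ∈ Ioc 0 2 := ⟨by positivity, by rw [inv_mul_le_iff₀ hc]; linarith⟩
  simp_rw [← sqrt_mul_sqrtProfile_inv_mul (by linarith : (0 : ℝ) < t)]
  refine abs_iteratedDeriv_inv_le_of_symbol isOpen_Ioi
    ((contDiff_const.mul (contDiff_sqrtProfile.comp (contDiff_const.mul contDiff_id))).add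
      contDiff_const).contDiffOn
    (fun y hy => ?_) hlam hlam (Real.one_le_sqrt.mpr (by norm_num)) ?_
    (fun i h1 h2 => abs_iteratedDeriv_rescale_le contDiff_sqrtProfile h1 hc rt hlam
      (hsymbol i h1 h2 _ hu))
  · have := sqrtProfile_pos (mul_pos (inv_pos.mpr hc) (mem_Ioi.mp hy))
    positivity
  · show lam ≤ √5 * (√t * sqrtProfile ((√t)⁻¹ * lam) + rt)
    have hlow := div_sqrt_five_le_sqrtProfile hu.1.le hu.2
    rw [div_le_iff₀ (by positivity), inv_mul_le_iff₀ hc] at hlow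
    nlinarith [Real.sqrt_nonneg 5]
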